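/- Let k ≥ 2 be an integer, let G = BS(1,k) = ℤ[1/k] ⋊_φ ℤ, let n ∈ ℤ, and let a₁, …, a_r ∈ ℤ[1/k] be distinct, so that A = {(a₁, tⁿ), …, (a_r, tⁿ)} is a set of r elements of G with equal t-exponent n. Then there exist natural numbers N₁, N₂ and a positive integer L such that, setting g = (0, t^{N₁})·(L, t⁰)·(0, t^{N₂}) ∈ G, the r elements g·(a_i, tⁿ), 1 ≤ i ≤ r, lie in pairwise distinct conjugacy classes of G; that is, c(g·A) = |A|. -/

import Mathlib

noncomputable section

/-- `ℤ[1/k]`: the additive subgroup `{a/kⁱ : a ∈ ℤ, i ∈ ℕ}` of `ℚ`. -/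
def zOneOver (k : ℕ) : AddSubgroup ℚ :=
  AddSubgroup.closure {x : ℚ | ∃ (a : ℤ) (i : ℕ), x = (a : ℚ) / (k : ℚ) ^ i}

lemma intCast_mem_zOneOver (k : ℕ) (a : ℤ) : (a : ℚ) ∈ zOneOver k :=
  AddSubgroup.subset_closure ⟨a, 0, by simp⟩

/-- Multiplication by `k` as an additive automorphism of `ℚ`. -/
def mulQ (k : ℕ) (hk : 2 ≤ k) : AddAut ℚ where
  toFun x := (k : ℚ) * x
  invFun x := ((k : ℚ))⁻¹ * x
  left_inv x := by
    have hk0 : (k : ℚ) ≠ 0 := by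
      have : 0 < k := by omega
      exact_mod_cast this.ne'
    field_simp
  right_inv x := by
    have hk0 : (k : ℚ) ≠ 0 := by
      have : 0 < k := by omega
      exact_mod_cast this.ne'
    field_simp
  map_add' x y := by ring

/-- The action of the generator `t` of `ℤ` on `ℚ` (written multiplicatively). -/
def bsAut (k : ℕ) (hk : 2 ≤ k) : MulAut (Multiplicative ℚ) :=
  AddEquiv.toMultiplicative (mulQ k hk)

lemma bsAut_apply (k : ℕ) (hk : 2 ≤ k) (y : Multiplicative ℚ) :
    Multiplicative.toAdd (bsAut k hk y) = (k : ℚ) * Multiplicative.toAdd y := rfl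

lemma bsAut_inv_apply (k : ℕ) (hk : 2 ≤ k) (y : Multiplicative ℚ) :
    Multiplicative.toAdd ((bsAut k hk)⁻¹ y) = ((k : ℚ))⁻¹ * Multiplicative.toAdd y := rfl

lemma bsAut_zpow (k : ℕ) (hk : 2 ≤ k) (n : ℤ) :
    ∀ y : Multiplicative ℚ,
      Multiplicative.toAdd ((bsAut k hk ^ n) y) = (k : ℚ) ^ n * Multiplicative.toAdd y := by
  have hk0 : (k : ℚ) ≠ 0 := by
    have : 0 < k := by omega
    exact_mod_cast this.ne'
  induction n using Int.induction_on with
  | zero => intro y; simp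
  | succ m ih =>
      intro y
      rw [zpow_add_one, MulAut.mul_apply, ih, bsAut_apply, zpow_add_one₀ hk0]
      ring
  | pred m ih =>
      intro y
      rw [zpow_sub_one, MulAut.mul_apply, ih, bsAut_inv_apply, zpow_sub_one₀ hk0]
      ring

lemma zOneOver_smul (k : ℕ) (hk : 2 ≤ k) (n : ℤ) {x : ℚ} (hx : x ∈ zOneOver k) :
    (k : ℚ) ^ n * x ∈ zOneOver k := by
  have hk0 : (k : ℚ) ≠ 0 := by
    have : 0 < k := by omega
    exact_mod_cast this.ne'
  induction hx using AddSubgroup.closure_induction with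
  | mem x hx =>
      obtain ⟨a, i, rfl⟩ := hx
      apply AddSubgroup.subset_closure
      rcases le_or_gt (i : ℤ) n with h | h
      · refine ⟨a * k ^ (n - i).toNat, 0, ?_⟩
        have h1 : ((n - i).toNat : ℤ) = n - i := Int.toNat_of_nonneg (by omega)
        push_cast
        rw [← zpow_natCast (k : ℚ) (n - i).toNat]
        rw [h1]
        rw [zpow_sub₀ hk0]
        field_simp
        ring_nf
        try simp only [zpow_natCast]
      · refine ⟨a, (i - n).toNat, ?_⟩
        have h1 : (((i : ℤ) - n).toNat : ℤ) = (i : ℤ) - n := Int.toNat_of_nonneg (by omega)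
        rw [← zpow_natCast (k : ℚ) i, ← zpow_natCast (k : ℚ) ((i : ℤ) - n).toNat, h1,
          zpow_sub₀ hk0]
        field_simp
  | zero => simpa using (zOneOver k).zero_mem
  | add x y hx hy ihx ihy =>
      rw [mul_add]
      exact add_mem ihx ihy
  | neg x hx ihx =>
      rw [mul_neg]
      exact neg_mem ihx

/-- The ambient group `ℚ ⋊_φ ℤ`, in which `BS(1,k) = ℤ[1/k] ⋊_φ ℤ` sits. -/
abbrev BSAmbient (k : ℕ) (hk : 2 ≤ k) :=
  Multiplicative ℚ ⋊[zpowersHom (MulAut (Multiplicative ℚ)) (bsAut k hk)] Multiplicative ℤ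

/-- The Baumslag–Solitar group `BS(1,k) = ℤ[1/k] ⋊_φ ℤ`, realised as the subgroup of
`ℚ ⋊_φ ℤ` of elements whose first coordinate lies in `ℤ[1/k]`. -/
def BS (k : ℕ) (hk : 2 ≤ k) : Subgroup (BSAmbient k hk) where
  carrier := {g | Multiplicative.toAdd g.left ∈ zOneOver k}
  one_mem' := by
    simpa using (zOneOver k).zero_mem
  mul_mem' := by
    intro a b ha hb
    simp only [Set.mem_setOf_eq, SemidirectProduct.mul_left, toAdd_mul] at *
    refine add_mem ha ?_
    rw [zpowersHom_apply, bsAut_zpow]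
    exact zOneOver_smul k hk _ hb
  inv_mem' := by
    intro a ha
    simp only [Set.mem_setOf_eq, SemidirectProduct.inv_left, zpowersHom_apply, toAdd_inv] at *
    rw [bsAut_zpow, toAdd_inv, mul_neg]
    exact neg_mem (zOneOver_smul k hk _ ha)

/-- The element `(x, tⁿ)` of `BS(1,k)`, for `x ∈ ℤ[1/k]` and `n ∈ ℤ`. -/
def bsElem (k : ℕ) (hk : 2 ≤ k) (x : ℚ) (hx : x ∈ zOneOver k) (n : ℤ) : ↥(BS k hk) :=
  ⟨⟨Multiplicative.ofAdd x, Multiplicative.ofAdd n⟩, hx⟩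

/-!
Left translation by `g` sends `(aᵢ, tⁿ)` to `(k^{N₁} Xᵢ, t^M)` with `Xᵢ = L + k^{N₂} aᵢ` and
`M = N₁ + N₂ + n`. Take `N₂` so that every `k^{N₂} aᵢ` is an integer, `L` so that all `Xᵢ` lie in
`[k^p, k^{p+1})`, and `N₁` so that `M ≥ 2(p + 1)`. A conjugator may be multiplied by powers of the
element it conjugates, so its `t`-exponent can be taken to be some `γ ∈ [0, M)`; as `k` is prime to
`k^M - 1`, conjugacy then gives `k^γ Xᵢ ≡ Xⱼ (mod k^M - 1)`. If `γ + p + 1 ≤ M`, both sides lie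
in `[1, k^M - 1]`, so they are equal, which forces `γ = 0`; otherwise the inverse rotation
`k^{M-γ} Xⱼ ≡ Xᵢ` is of that kind, with `M - γ > 0`, which is impossible.
-/

open Multiplicative Filter

theorem eventually_pow_mul_eq_intCast_of_mem_zOneOver {k : ℕ} (hk : k ≠ 0) {x : ℚ}
    (hx : x ∈ zOneOver k) : ∀ᶠ i in atTop, ∃ z : ℤ, (k : ℚ) ^ i * x = z := by
  induction hx using AddSubgroup.closure_induction with
  | mem x hx =>
    obtain ⟨a, i, rfl⟩ := hx
    filter_upwards [eventually_ge_atTop i] with j hij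
    refine ⟨a * (k : ℤ) ^ (j - i), ?_⟩
    rw [← Nat.sub_add_cancel hij, pow_add, Nat.add_sub_cancel]
    push_cast
    field_simp
  | zero => exact Eventually.of_forall fun _ => ⟨0, by simp⟩
  | add x y _ _ hx hy =>
    filter_upwards [hx, hy] with i ⟨a, ha⟩ ⟨b, hb⟩
    exact ⟨a + b, by push_cast; rw [mul_add, ha, hb]⟩
  | neg x _ hx =>
    filter_upwards [hx] with i ⟨a, ha⟩
    exact ⟨-a, by push_cast; rw [mul_neg, ha]⟩

theorem isCoprime_pow_sub_one_self (K : ℤ) {m : ℕ} (hm : 0 < m) : IsCoprime (K ^ m - 1) K :=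
  ⟨-1, K ^ (m - 1), by rw [← pow_succ, Nat.sub_add_cancel hm]; ring⟩

theorem dvd_of_pow_mul_eq_mul_of_mem_zOneOver {k : ℕ} (hk : k ≠ 0) {D z : ℤ}
    (hD : IsCoprime D k) {N : ℕ} {y : ℚ} (hy : y ∈ zOneOver k)
    (h : (k : ℚ) ^ N * z = D * y) : D ∣ z := by
  obtain ⟨i, A, hA⟩ := (eventually_pow_mul_eq_intCast_of_mem_zOneOver hk hy).exists
  have hz : (k : ℤ) ^ (i + N) * z = D * A := by
    have : (k : ℚ) ^ (i + N) * z = D * A := by rw [← hA, pow_add]; linear_combination (k : ℚ) ^ i * h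
    exact_mod_cast this
  exact (hD.pow_right).dvd_of_dvd_mul_left ⟨A, hz⟩

section

variable {K X Y : ℤ} {p M γ : ℕ}

theorem eq_zero_and_eq_of_dvd_pow_mul_sub (hK : 1 ≤ K) (hX : X ∈ Set.Ico (K ^ p) (K ^ (p + 1)))
    (hY : Y ∈ Set.Ico (K ^ p) (K ^ (p + 1))) (hγ : γ + (p + 1) ≤ M)
    (h : K ^ M - 1 ∣ K ^ γ * X - Y) : γ = 0 ∧ X = Y := by
  obtain ⟨hX₁, hX₂⟩ := hX
  obtain ⟨hY₁, hY₂⟩ := hY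
  have hpos : ∀ j : ℕ, 1 ≤ K ^ j := fun j => one_le_pow₀ hK
  have hmono : ∀ {i j : ℕ}, i ≤ j → K ^ i ≤ K ^ j := fun hij => pow_le_pow_right₀ hK hij
  have hγX : K ^ γ * X ≤ K ^ M - K ^ γ :=
    calc K ^ γ * X ≤ K ^ γ * (K ^ (p + 1) - 1) := by gcongr; omega
      _ = K ^ (γ + (p + 1)) - K ^ γ := by ring
      _ ≤ K ^ M - K ^ γ := by linarith [hmono hγ]
  have hγX₀ : 1 ≤ K ^ γ * X := one_le_mul_of_one_le_of_one_le (hpos γ) ((hpos p).trans hX₁)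
  -- both `K ^ γ * X` and `Y` lie in `[1, K ^ M - 1]`, so the congruence is an equality
  have heq : K ^ γ * X = Y := by
    refine sub_eq_zero.1 (Int.eq_zero_of_abs_lt_dvd h ?_)
    rw [abs_lt]
    constructor <;> linarith [hpos p, hpos γ, hmono (show p + 1 ≤ M by omega)]
  obtain rfl : γ = 0 := by
    by_contra hγ₀
    have : K ^ (p + 1) ≤ K ^ γ * X :=
      calc K ^ (p + 1) = K ^ 1 * K ^ p := by ring
        _ ≤ K ^ γ * X := by gcongr; omega
    linarith
  simpa using heq

theorem eq_of_dvd_pow_mul_sub (hK : 1 ≤ K) (hX : X ∈ Set.Ico (K ^ p) (K ^ (p + 1)))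
    (hY : Y ∈ Set.Ico (K ^ p) (K ^ (p + 1))) (hM : 2 * (p + 1) ≤ M) (hγ : γ < M)
    (h : K ^ M - 1 ∣ K ^ γ * X - Y) : X = Y := by
  by_cases hγp : γ + (p + 1) ≤ M
  · exact (eq_zero_and_eq_of_dvd_pow_mul_sub hK hX hY hγp h).2
  -- otherwise rotate back: `K ^ (M - γ) * Y ≡ K ^ M * X ≡ X`, and now `M - γ` is small
  have h' : K ^ M - 1 ∣ K ^ (M - γ) * Y - X := by
    have hsplit : K ^ (M - γ) * Y - X = (K ^ M - 1) * X - K ^ (M - γ) * (K ^ γ * X - Y) := by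
      rw [← Nat.sub_add_cancel hγ.le, pow_add, Nat.add_sub_cancel]; ring
    rw [hsplit]
    exact dvd_sub (dvd_mul_right _ _) (h.mul_left _)
  have := (eq_zero_and_eq_of_dvd_pow_mul_sub hK hY hX (by omega) h').1
  omega

end

theorem exists_pos_add_mem_Ico_pow {ι : Type*} [Finite ι] (e : ι → ℤ) {K : ℤ} (hK : 2 ≤ K) :
    ∃ L > 0, ∃ p : ℕ, ∀ i, L + e i ∈ Set.Ico (K ^ p) (K ^ (p + 1)) := by
  obtain ⟨B, hB⟩ := (Set.finite_range fun i => |e i|).bddAbove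
  obtain ⟨p, hp⟩ := pow_unbounded_of_one_lt (2 * |B|) (by omega : 1 < K)
  refine ⟨K ^ p + |B|, by positivity, p, fun i => ?_⟩
  have hi := abs_le.1 ((hB ⟨i, rfl⟩).trans (le_abs_self B))
  have : 2 * K ^ p ≤ K ^ (p + 1) := by rw [pow_succ]; nlinarith [pow_pos (by omega : 0 < K) p]
  constructor <;> linarith

section BS

variable {k : ℕ} {hk : 2 ≤ k}

theorem bsElem_mul {x x' : ℚ} (hx : x ∈ zOneOver k) (hx' : x' ∈ zOneOver k) (m m' : ℤ) :
    bsElem k hk x hx m * bsElem k hk x' hx' m' =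
      bsElem k hk (x + (k : ℚ) ^ m * x') (add_mem hx (zOneOver_smul k hk m hx')) (m + m') := by
  refine Subtype.ext (SemidirectProduct.ext ?_ ?_)
  · apply toAdd.injective
    simp [bsElem, bsAut_zpow]
  · simp [bsElem, ← ofAdd_add]

theorem bsElem_inj {x x' : ℚ} {hx : x ∈ zOneOver k} {hx' : x' ∈ zOneOver k} {m m' : ℤ} :
    bsElem k hk x hx m = bsElem k hk x' hx' m' ↔ x = x' ∧ m = m' := by
  simp [bsElem, Subtype.ext_iff, SemidirectProduct.ext_iff]

theorem exists_eq_bsElem (g : BS k hk) : ∃ y hy r, g = bsElem k hk y hy r := ⟨_, g.2, _, rfl⟩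

variable (k hk) in
def tExponent : BS k hk →* Multiplicative ℤ :=
  SemidirectProduct.rightHom.comp (BS k hk).subtype

@[simp]
theorem tExponent_bsElem {x : ℚ} (hx : x ∈ zOneOver k) (m : ℤ) :
    tExponent k hk (bsElem k hk x hx m) = ofAdd m := rfl

theorem exists_pow_mul_sub_eq_of_isConj {x x' : ℚ} {hx : x ∈ zOneOver k}
    {hx' : x' ∈ zOneOver k} {m : ℕ} (hm : 0 < m)
    (h : IsConj (bsElem k hk x hx m) (bsElem k hk x' hx' m)) :
    ∃ γ < m, ∃ y ∈ zOneOver k, (k : ℚ) ^ γ * x - x' = ((k : ℚ) ^ m - 1) * y := by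
  obtain ⟨⟨c, _, _, _⟩, hc⟩ := h
  generalize hs : toAdd (tExponent k hk c) = s
  -- multiplying the conjugator by a power of `(x, tᵐ)` reduces its `t`-exponent modulo `m`
  obtain ⟨y, hy, r, hd⟩ := exists_eq_bsElem (c * bsElem k hk x hx m ^ (-(s / m)))
  have hsemi : SemiconjBy (bsElem k hk y hy r) (bsElem k hk x hx m) (bsElem k hk x' hx' m) :=
    hd ▸ hc.mul_left ((Commute.refl _).zpow_left _)
  have hr : r = s % m := by
    have := congrArg (fun g => toAdd (tExponent k hk g)) hd
    simp only [map_mul, map_zpow, tExponent_bsElem, toAdd_mul, toAdd_zpow, toAdd_ofAdd, hs,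
      smul_eq_mul] at this
    rw [← this, Int.emod_def]; ring
  rw [SemiconjBy, bsElem_mul, bsElem_mul, bsElem_inj] at hsemi
  have hr₀ : 0 ≤ r ∧ r < m := hr ▸ ⟨Int.emod_nonneg _ (by omega), Int.emod_lt_of_pos _ (by omega)⟩
  refine ⟨r.toNat, by omega, y, hy, ?_⟩
  rw [← zpow_natCast, Int.toNat_of_nonneg hr₀.1]
  rw [zpow_natCast] at hsemi
  linarith [hsemi.1]

end BS

/-- Let `k ≥ 2`, `G = BS(1,k) = ℤ[1/k] ⋊_φ ℤ`, `n ∈ ℤ`, and let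
`a₁, …, a_r ∈ ℤ[1/k]` be distinct, giving the set `A = {(a₁,tⁿ), …, (a_r,tⁿ)}` of `r` elements
of equal `t`-exponent `n`.  Then there are `N₁, N₂ ∈ ℕ` and a positive integer `L` such that,
with `g = (0,t^{N₁})·(L,1)·(0,t^{N₂})`, the `r` elements `g·(aᵢ,tⁿ)` lie in pairwise distinct
conjugacy classes of `G`; that is, `c(g·A) = |A|`. -/
theorem bs_translate_set_pairwise_nonconjugate (k : ℕ) (hk : 2 ≤ k) (n : ℤ) (r : ℕ)
    (a : Fin r → ℚ) (hmem : ∀ i, a i ∈ zOneOver k) (hinj : Function.Injective a) :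
    ∃ (N₁ N₂ : ℕ) (L : ℤ), 0 < L ∧
      ∀ i j : Fin r, i ≠ j →
        ¬ IsConj
          (bsElem k hk 0 ((zOneOver k).zero_mem) (N₁ : ℤ) *
              bsElem k hk (L : ℚ) (intCast_mem_zOneOver k L) 0 *
              bsElem k hk 0 ((zOneOver k).zero_mem) (N₂ : ℤ) *
              bsElem k hk (a i) (hmem i) n)
          (bsElem k hk 0 ((zOneOver k).zero_mem) (N₁ : ℤ) *
              bsElem k hk (L : ℚ) (intCast_mem_zOneOver k L) 0 *
              bsElem k hk 0 ((zOneOver k).zero_mem) (N₂ : ℤ) *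
              bsElem k hk (a j) (hmem j) n) := by
  have hk₀ : k ≠ 0 := by omega
  obtain ⟨N₂, hN₂⟩ := (eventually_all.2 fun i =>
    eventually_pow_mul_eq_intCast_of_mem_zOneOver hk₀ (hmem i)).exists
  choose e he using hN₂
  have he_inj : Function.Injective e := fun i j hij =>
    hinj <| mul_left_cancel₀ (pow_ne_zero N₂ (Nat.cast_ne_zero.2 hk₀)) <| by rw [he, he, hij]
  obtain ⟨L, hL, p, hLe⟩ := exists_pos_add_mem_Ico_pow e (show (2 : ℤ) ≤ k by exact_mod_cast hk)
  set N₁ := 2 * (p + 1) + 2 * n.natAbs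
  obtain ⟨M, hM⟩ : ∃ M : ℕ, (N₁ : ℤ) + 0 + N₂ + n = M := ⟨_, (Int.toNat_of_nonneg (by omega)).symm⟩
  refine ⟨N₁, N₂, L, hL, fun i j hij hconj => hij (he_inj (add_left_cancel (a := L) ?_))⟩
  simp only [bsElem_mul, hM] at hconj
  obtain ⟨γ, hγ, y, hy, hxy⟩ := exists_pow_mul_sub_eq_of_isConj (by omega) hconj
  have hdvd : (k : ℤ) ^ M - 1 ∣ (k : ℤ) ^ γ * (L + e i) - (L + e j) := by
    refine dvd_of_pow_mul_eq_mul_of_mem_zOneOver hk₀ (isCoprime_pow_sub_one_self _ (by omega))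
      (N := N₁) hy ?_
    simp only [add_zero, mul_zero, zero_add, ← Nat.cast_add, zpow_natCast, pow_add, mul_assoc, he]
      at hxy
    push_cast
    linear_combination hxy
  exact eq_of_dvd_pow_mul_sub (by omega) (hLe i) (hLe j) (by omega) hγ hdvd
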